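/- For every m ≥ 0 there exist real polynomials q and q' such that, as polynomial identities in p, p·d_{m-1}(p+1)·d_m(p) + (p+1)·d_{m-1}(p)·d_m(p+1) = q(p² + p) and d_{m-1}(p+1)·d_m(p) - d_{m-1}(p)·d_m(p+1) = q'(p² + p). -/

import Mathlib

open Polynomial

/-- Numerators of the continued fraction `a_1/(p + a_2/(p + ⋯))`, shifted index:
`nseq a (k+1) = n_k`, with `n_{-1} = 1`, `n_0 = 0`, and
`n_k = p·n_{k-1} + a_k·n_{k-2}` for `k ≥ 1`. -/
noncomputable def nseq (a : ℕ → ℝ) : ℕ → Polynomial ℝ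
  | 0 => 1
  | 1 => 0
  | (k+2) => X * nseq a (k+1) + C (a (k+1)) * nseq a k

/-- Denominators of the continued fraction `a_1/(p + a_2/(p + ⋯))`, shifted index:
`dseq a (k+1) = d_k`, with `d_{-1} = 0`, `d_0 = 1`, and
`d_k = p·d_{k-1} + a_k·d_{k-2}` for `k ≥ 1`. -/
noncomputable def dseq (a : ℕ → ℝ) : ℕ → Polynomial ℝ
  | 0 => 0
  | 1 => 1
  | (k+2) => X * dseq a (k+1) + C (a (k+1)) * dseq a k


theorem Polynomial.mem_adjoin_singleton_iff_exists_comp {R : Type*} [CommSemiring R]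
    {f g : R[X]} : f ∈ Algebra.adjoin R {g} ↔ ∃ q : R[X], q.comp g = f := by
  simp only [Algebra.adjoin_singleton_eq_range_aeval, AlgHom.mem_range, comp_eq_aeval]

lemma dseq_succ_succ (a : ℕ → ℝ) (k : ℕ) :
    dseq a (k+2) = X * dseq a (k+1) + C (a (k+1)) * dseq a k := rfl

lemma dseq_succ_succ_comp_X_add_one (a : ℕ → ℝ) (k : ℕ) :
    (dseq a (k+2)).comp (X + 1) =
      (X + 1) * (dseq a (k+1)).comp (X + 1) + C (a (k+1)) * (dseq a k).comp (X + 1) := by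
  simp only [dseq_succ_succ, add_comp, mul_comp, X_comp, C_comp]

local notation "ℝ[z]" => Algebra.adjoin ℝ {(X ^ 2 + X : ℝ[X])}

/-- Writing `A, T, P, Q` for the four products, the recurrence with `c = a_m` sends them to
`((2z+1)P + c(A+T), -P - cT, zP + cA + c²Q, P)`; `P` and `Q` are carried along only for this. -/
theorem dseq_comp_X_add_one_products_mem_adjoin (a : ℕ → ℝ) (m : ℕ) :
    X * (dseq a m).comp (X + 1) * dseq a (m+1)
        + (X + 1) * dseq a m * (dseq a (m+1)).comp (X + 1) ∈ ℝ[z] ∧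
      (dseq a m).comp (X + 1) * dseq a (m+1) - dseq a m * (dseq a (m+1)).comp (X + 1) ∈ ℝ[z] ∧
      (dseq a (m+1)).comp (X + 1) * dseq a (m+1) ∈ ℝ[z] ∧
      (dseq a m).comp (X + 1) * dseq a m ∈ ℝ[z] := by
  have hz : (X ^ 2 + X : ℝ[X]) ∈ ℝ[z] := Algebra.self_mem_adjoin_singleton ℝ _
  induction m with
  | zero => simp [dseq]
  | succ m ih =>
    obtain ⟨hA, hT, hP, hQ⟩ := ih
    have hc : C (a (m+1)) ∈ ℝ[z] := algebraMap_mem _ (a (m+1))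
    rw [dseq_succ_succ_comp_X_add_one, dseq_succ_succ]
    refine ⟨?_, ?_, ?_, hP⟩
    · convert add_mem (mul_mem (add_mem (mul_mem (ofNat_mem _ 2) hz) (one_mem _)) hP)
        (mul_mem hc (add_mem hA hT)) using 1
      ring
    · convert sub_mem (neg_mem hP) (mul_mem hc hT) using 1
      ring
    · convert add_mem (add_mem (mul_mem hz hP) (mul_mem hc hA)) (mul_mem (pow_mem hc 2) hQ)
        using 1
      ring

/-- `p·d_{m-1}(p+1)·d_m(p) + (p+1)·d_{m-1}(p)·d_m(p+1)` and
`d_{m-1}(p+1)·d_m(p) - d_{m-1}(p)·d_m(p+1)` are polynomials in `z = p(p+1)`.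
Here `d_{m-1} = dseq a m` and `d_m = dseq a (m+1)`. -/
theorem denominator_combinations_rational_in_z (a : ℕ → ℝ) (m : ℕ) :
    ∃ q q' : Polynomial ℝ,
      X * (dseq a m).comp (X + 1) * dseq a (m+1)
        + (X + 1) * dseq a m * (dseq a (m+1)).comp (X + 1) = q.comp (X^2 + X) ∧
      (dseq a m).comp (X + 1) * dseq a (m+1)
        - dseq a m * (dseq a (m+1)).comp (X + 1) = q'.comp (X^2 + X) := by
  obtain ⟨hA, hT, -, -⟩ := dseq_comp_X_add_one_products_mem_adjoin a m
  obtain ⟨q, hq⟩ := mem_adjoin_singleton_iff_exists_comp.mp hA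
  obtain ⟨q', hq'⟩ := mem_adjoin_singleton_iff_exists_comp.mp hT
  exact ⟨q, q', hq.symm, hq'.symm⟩
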